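/- arXiv:math/0505627 — 2 statements merged into one kernel-verified Lean document; each statement's English description precedes it below -/
import Mathlib

section
/- Let T form a wandering N-gon under f(z) = z^d satisfying the standing assumption (f|_{T_i} orientation preserving, s_{N−2}(T_i) < ε_T < 1/(3dN) for all i). For any i ≥ 0 and any k ∈ {1, …, N−2}, exactly one of the following holds: (1) s_k(T_i) > s̃_cr(T_i) and the image-hole of H_k(T_i) is H_{k+1}(T_{i+1}); or (2) s̃_cr(T_i) > s_k(T_i) and the image-hole of H_k(T_i) is H_k(T_{i+1}). Moreover, if (1) holds for some k, then the image-hole of the critical hole is one of the k smallest holes of T_{i+1} and s̃_cr(T_i) < ε_T. -/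
/-!
Write `Bₙ = fⁿ(T)` and `ℓ n k` for the length of the `k`-th smallest hole of `Bₙ`. A hole of `Bₙ`
is the open arc between two consecutive points, and as `f` preserves the circular order on `Bₙ`,
it maps onto a hole of `Bₙ₊₁`. This is a bijection `σ` between the holes, with
`ℓ (n + 1) (σ k) = fract (d ℓ n k) = d · rem (ℓ n k)`.

Two distinct holes never have the same length below `d ε`: a tie below `ε` is multiplied by `d`
at each step, so it would reach `[ε, d ε)`, where the two tied holes are the two largest ones and
the `N` lengths could not add up to `1`. Hence the `N - 2` small holes of `Bᵢ` keep their order,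
with image lengths `d ℓ i k`. The image of the critical hole has length `d s̃_cr`, and the other
large hole maps onto a hole longer than the image of `H_k` (if it were not, all image lengths
would be below `d ε`). Counting the holes below and above `σ k` gives `σ k = k + 1` or `σ k = k`
according as `s̃_cr < s_k` or `s_k < s̃_cr`.
-/

open MeasureTheory Set Metric Filter Topology

noncomputable section

abbrev S1 := AddCircle (1 : ℝ)

def fd (d : ℕ) : S1 → S1 := fun x => d • x

def len (A : Set S1) : ℝ := (volume A).toReal

def IsHole (B H : Set S1) : Prop := ∃ x ∈ Bᶜ, H = connectedComponentIn Bᶜ x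

def openArc (u w : S1) : Set S1 := {x | SBtw.sbtw u x w}

def OrientPresOn (g : S1 → S1) (B : Set S1) : Prop :=
  Set.InjOn g B ∧ ∀ a ∈ B, ∀ b ∈ B, ∀ c ∈ B, SBtw.sbtw a b c → SBtw.sbtw (g a) (g b) (g c)

def emb (x : S1) : ℂ := (AddCircle.toCircle x : ℂ)

def chord (a b : S1) : Set ℂ := segment ℝ (emb a) (emb b)

def CH (A : Set S1) : Set ℂ := convexHull ℝ (emb '' A)

def Wandering (d N : ℕ) (T : Set S1) : Prop :=
  ∀ i j : ℕ, ((fd d)^[i] '' T).ncard = N ∧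
    (i ≠ j → Disjoint (CH ((fd d)^[i] '' T)) (CH ((fd d)^[j] '' T)))

def IsHoleEnum (B : Set S1) {N : ℕ} (H : Fin N → Set S1) : Prop :=
  Function.Injective H ∧ (∀ k, IsHole B (H k)) ∧ (∀ G, IsHole B G → ∃ k, H k = G) ∧
  ∀ k l : Fin N, k ≤ l → len (H k) ≤ len (H l)

def rem (d : ℕ) (s : ℝ) : ℝ := s - (⌊(d : ℝ) * s⌋ : ℝ) / d

def ImageHoleRel (g : S1 → S1) (H K : Set S1) : Prop :=
  ∃ u w : S1, u ≠ w ∧ H = openArc u w ∧ K = openArc (g u) (g w)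

def InLimitSet (d : ℕ) (T : Set S1) (a b : S1) : Prop :=
  ∃ φ : ℕ → ℕ, StrictMono φ ∧ ∃ u v : ℕ → S1,
    (∀ n, u n ∈ (fd d)^[φ n] '' T ∧ v n ∈ (fd d)^[φ n] '' T) ∧
    Tendsto (fun n => hausdorffDist (chord (u n) (v n)) (chord a b)) atTop (nhds 0)

open Function

theorem fract_sub_of_le {s t : ℝ} (ht : 0 ≤ t) (hts : t ≤ s) (hs : s < 1) :
    Int.fract (s - t) = s - t :=
  Int.fract_eq_self.2 ⟨by linarith, by linarith⟩

theorem fract_sub_of_lt {s t : ℝ} (hs : 0 ≤ s) (hst : s < t) (ht : t < 1) :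
    Int.fract (s - t) = s - t + 1 := by
  rw [← Int.fract_add_one, Int.fract_eq_self.2 ⟨by linarith, by linarith⟩]

/-- The length of the counterclockwise arc from `a` to `b`. -/
def arcLength (a b : S1) : ℝ :=
  (QuotientAddGroup.equivIcoMod (p := (1 : ℝ)) one_pos 0 (b - a) : ℝ)

theorem arcLength_coe (a b : ℝ) : arcLength a b = Int.fract (b - a) := by
  rw [arcLength, ← AddCircle.coe_sub, QuotientAddGroup.equivIcoMod_coe]
  exact toIcoMod_zero_one _

theorem arcLength_nonneg (a b : S1) : 0 ≤ arcLength a b := by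
  induction a using QuotientAddGroup.induction_on
  induction b using QuotientAddGroup.induction_on
  rw [arcLength_coe]; exact Int.fract_nonneg _

theorem arcLength_lt_one (a b : S1) : arcLength a b < 1 := by
  induction a using QuotientAddGroup.induction_on
  induction b using QuotientAddGroup.induction_on
  rw [arcLength_coe]; exact Int.fract_lt_one _

theorem add_arcLength (a b : S1) : a + (arcLength a b : S1) = b := by
  induction a using QuotientAddGroup.induction_on with | H a =>
  induction b using QuotientAddGroup.induction_on with | H b =>
  rw [arcLength_coe, AddCircle.coe_fract, ← AddCircle.coe_add, add_sub_cancel]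

theorem arcLength_add_coe (a : S1) (s : ℝ) : arcLength a (a + s) = Int.fract s := by
  induction a using QuotientAddGroup.induction_on
  rw [← AddCircle.coe_add, arcLength_coe, add_sub_cancel_left]

theorem arcLength_eq_zero_iff {a b : S1} : arcLength a b = 0 ↔ b = a := by
  refine ⟨fun h => ?_, fun h => ?_⟩
  · rw [← add_arcLength a b, h, AddCircle.coe_zero, add_zero]
  · simpa [h] using arcLength_add_coe a 0

theorem arcLength_pos {a b : S1} (h : b ≠ a) : 0 < arcLength a b :=
  (arcLength_nonneg a b).lt_of_ne' (mt arcLength_eq_zero_iff.1 h)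

theorem arcLength_eq_fract_sub (x a b : S1) :
    arcLength a b = Int.fract (arcLength x b - arcLength x a) := by
  induction x using QuotientAddGroup.induction_on with | H x =>
  induction a using QuotientAddGroup.induction_on with | H a =>
  induction b using QuotientAddGroup.induction_on with | H b =>
  rw [arcLength_coe, arcLength_coe, arcLength_coe, Int.fract_eq_fract]
  exact ⟨⌊b - x⌋ - ⌊a - x⌋, by push_cast [Int.fract]; ring⟩

theorem sbtw_iff_arcLength (a y c : S1) :
    SBtw.sbtw a y c ↔ 0 < arcLength a y ∧ arcLength a y < arcLength a c := by
  have hyc : arcLength c y = Int.fract (arcLength a y - arcLength a c) :=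
    arcLength_eq_fract_sub a c y
  induction a using QuotientAddGroup.induction_on with | H a =>
  induction y using QuotientAddGroup.induction_on with | H y =>
  induction c using QuotientAddGroup.induction_on with | H c =>
  rw [sbtw_iff_not_btw, QuotientAddGroup.btw_coe_iff', toIcoMod_zero_one,
    toIocMod_eq_sub_fract_mul, show (0 + 1 - (a - c)) / 1 = c - a + 1 by ring,
    Int.fract_add_one, ← arcLength_coe, ← arcLength_coe, hyc, mul_one, zero_add]
  have hy := arcLength_nonneg (a : S1) y
  have hy' := arcLength_lt_one (a : S1) y
  have hc := arcLength_nonneg (a : S1) c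
  have hc' := arcLength_lt_one (a : S1) c
  rcases lt_or_ge (arcLength a y) (arcLength a c) with h | h
  · rw [fract_sub_of_lt hy h hc']
    constructor <;> intro h' <;> [constructor; skip] <;> linarith
  · rw [fract_sub_of_le hc h hy']
    constructor <;> intro h' <;> [linarith; linarith [h'.2]]

theorem arcLength_nsmul (d : ℕ) (a b : S1) :
    arcLength (d • a) (d • b) = Int.fract (d * arcLength a b) := by
  induction a using QuotientAddGroup.induction_on with | H a =>
  induction b using QuotientAddGroup.induction_on with | H b =>
  rw [← AddCircle.coe_nsmul, ← AddCircle.coe_nsmul, arcLength_coe, arcLength_coe,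
    Int.fract_eq_fract]
  exact ⟨d * ⌊b - a⌋, by push_cast [nsmul_eq_mul, Int.fract]; ring⟩

theorem mem_openArc {a c x : S1} : x ∈ openArc a c ↔ SBtw.sbtw a x c := Iff.rfl

theorem openArc_eq_image_Ioo (a : ℝ) (c : S1) :
    openArc a c = ((↑) : ℝ → S1) '' Ioo a (a + arcLength a c) := by
  ext y
  simp only [mem_openArc, sbtw_iff_arcLength, mem_image, mem_Ioo]
  constructor
  · rintro ⟨h₀, h₁⟩
    exact ⟨a + arcLength a y, ⟨by linarith, by linarith⟩, by
      rw [AddCircle.coe_add, add_arcLength]⟩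
  · rintro ⟨t, ⟨h₀, h₁⟩, rfl⟩
    have := arcLength_lt_one (a : S1) c
    rw [arcLength_coe a t, Int.fract_eq_self.2 ⟨by linarith, by linarith⟩]
    constructor <;> linarith

theorem isOpen_openArc (a c : S1) : IsOpen (openArc a c) := by
  induction a using QuotientAddGroup.induction_on with | H a =>
  rw [openArc_eq_image_Ioo]
  exact QuotientAddGroup.isOpenMap_coe _ isOpen_Ioo

theorem isPreconnected_openArc (a c : S1) : IsPreconnected (openArc a c) := by
  induction a using QuotientAddGroup.induction_on with | H a =>
  rw [openArc_eq_image_Ioo]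
  exact isPreconnected_Ioo.image _ (AddCircle.continuous_mk' 1).continuousOn

theorem openArc_nonempty {a c : S1} (h : a ≠ c) : (openArc a c).Nonempty := by
  induction a using QuotientAddGroup.induction_on with | H a =>
  rw [openArc_eq_image_Ioo]
  exact (nonempty_Ioo.2 (lt_add_of_pos_right a (arcLength_pos h.symm))).image _

theorem closure_openArc {a c : S1} (h : a ≠ c) :
    closure (openArc a c) = insert a (insert c (openArc a c)) := by
  induction a using QuotientAddGroup.induction_on with | H a =>
  have hlt : a < a + arcLength a c := lt_add_of_pos_right a (arcLength_pos h.symm)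
  have hIcc : ((↑) : ℝ → S1) '' Icc a (a + arcLength a c) = insert (a : S1) (insert c
      (((↑) : ℝ → S1) '' Ioo a (a + arcLength a c))) := by
    rw [← Ico_insert_right hlt.le, ← Ioo_insert_left hlt, image_insert_eq, image_insert_eq,
      Set.insert_comm, AddCircle.coe_add, add_arcLength]
  rw [openArc_eq_image_Ioo, ← hIcc]
  refine (closure_minimal (image_mono Ioo_subset_Icc_self)
    (isCompact_Icc.image (AddCircle.continuous_mk' 1)).isClosed).antisymm ?_
  rw [← closure_Ioo hlt.ne]
  exact image_closure_subset_closure_image (AddCircle.continuous_mk' 1)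

theorem openArc_injective {a c a' c' : S1} (h : a ≠ c) (h' : a' ≠ c')
    (he : openArc a c = openArc a' c') : a = a' ∧ c = c' := by
  have hends : ∀ {a c : S1}, a ≠ c → closure (openArc a c) \ openArc a c = {a, c} := by
    intro a c h
    have ha : a ∉ openArc a c := mem_openArc.not.2 sbtw_irrefl_left
    have hc : c ∉ openArc a c := mem_openArc.not.2 sbtw_irrefl_right
    rw [closure_openArc h, insert_sdiff_of_notMem _ ha, insert_sdiff_of_notMem _ hc, sdiff_self,
      insert_empty_eq]
  have hpair : ({a, c} : Set S1) = {a', c'} := by rw [← hends h, ← hends h', he]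
  refine (Set.pair_eq_pair_iff.1 hpair).resolve_right ?_
  rintro ⟨rfl, rfl⟩
  obtain ⟨y, hy⟩ := openArc_nonempty h
  exact sbtw_asymm (mem_openArc.1 hy) (mem_openArc.1 (he ▸ hy))

theorem volume_openArc (a c : S1) : volume (openArc a c) = ENNReal.ofReal (arcLength a c) := by
  induction a using QuotientAddGroup.induction_on with | H a =>
  set g := arcLength a c
  have hg : g < 1 := arcLength_lt_one _ _
  rw [AddCircle.add_projection_respects_measure 1 a (isOpen_openArc _ _).measurableSet,
    openArc_eq_image_Ioo]
  suffices QuotientAddGroup.mk ⁻¹' (((↑) : ℝ → S1) '' Ioo a (a + g)) ∩ Ioc a (a + 1) =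
      Ioo a (a + g) by
    rw [this, Real.volume_Ioo, add_sub_cancel_left]
  refine Subset.antisymm ?_ fun x hx => ⟨⟨x, hx, rfl⟩, hx.1, by linarith [hx.2]⟩
  rintro x ⟨⟨y, hy, hyx⟩, hx⟩
  have hyIco : y ∈ Ico a (a + 1) := ⟨hy.1.le, by linarith [hy.2]⟩
  rcases hx.2.lt_or_eq with hx' | rfl
  · rwa [← (AddCircle.coe_eq_coe_iff_of_mem_Ico hyIco ⟨hx.1.le, hx'⟩).1 hyx]
  · rw [AddCircle.coe_add, AddCircle.coe_period, add_zero,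
      AddCircle.coe_eq_coe_iff_of_mem_Ico hyIco ⟨le_rfl, by linarith⟩] at hyx
    exact absurd hy.1 (hyx ▸ lt_irrefl a)

theorem len_openArc (a c : S1) : len (openArc a c) = arcLength a c := by
  rw [len, volume_openArc, ENNReal.toReal_ofReal (arcLength_nonneg a c)]

instance : NullSingletonClass (volume : Measure S1) where
  measure_singleton x := by
    simpa [Metric.closedBall_zero] using AddCircle.volume_closedBall (T := 1) (x := x) 0

theorem arcLength_injective (x : S1) : Injective (arcLength x) := fun b b' h => by
  rw [← add_arcLength x b, h, add_arcLength]

theorem sbtw_iff_of_arcLength_lt {x u w : S1} (h : arcLength x w < arcLength x u) (y : S1) :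
    SBtw.sbtw u y w ↔ arcLength x y < arcLength x w ∨ arcLength x u < arcLength x y := by
  rw [sbtw_iff_arcLength, arcLength_eq_fract_sub x u y, arcLength_eq_fract_sub x u w,
    fract_sub_of_lt (arcLength_nonneg x w) h (arcLength_lt_one x u)]
  have := arcLength_nonneg x y
  have := arcLength_lt_one x y
  have := arcLength_nonneg x w
  have := arcLength_lt_one x u
  rcases lt_or_ge (arcLength x y) (arcLength x u) with hy | hy
  · rw [fract_sub_of_lt (arcLength_nonneg x y) hy (arcLength_lt_one x u)]
    constructor
    · exact fun h' => Or.inl (by linarith [h'.2])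
    · rintro (h' | h') <;> constructor <;> linarith
  · rw [fract_sub_of_le (arcLength_nonneg x u) hy (arcLength_lt_one x y)]
    constructor
    · exact fun h' => Or.inr (by linarith [h'.1])
    · rintro (h' | h') <;> constructor <;> linarith

theorem sbtw_or_sbtw_of_ne {a b c : S1} (hab : a ≠ b) (hbc : b ≠ c) (hca : c ≠ a) :
    SBtw.sbtw a b c ∨ SBtw.sbtw c b a := by
  by_cases h : Btw.btw a b c
  · refine Or.inl (sbtw_iff_not_btw.2 fun h' => ?_)
    rcases h.antisymm h' with h'' | h'' | h'' <;> contradiction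
  · exact Or.inr (sbtw_iff_not_btw.2 h)

theorem connectedComponentIn_compl_eq_openArc {B : Set S1} {u w x : S1} (hu : u ∈ B)
    (hw : w ∈ B) (hdisj : Disjoint (openArc u w) B) (hx : x ∈ openArc u w) :
    connectedComponentIn Bᶜ x = openArc u w := by
  have harc : openArc u w ⊆ Bᶜ := hdisj.subset_compl_right
  have huw : u ≠ w := by rintro rfl; exact sbtw_irrefl_left_right (mem_openArc.1 hx)
  refine Subset.antisymm ?_ ((isPreconnected_openArc u w).subset_connectedComponentIn hx harc)
  refine isPreconnected_connectedComponentIn.subset_of_closure_inter_subset (isOpen_openArc u w)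
    ⟨x, mem_connectedComponentIn (harc hx), hx⟩ ?_
  rintro y ⟨hy, hyB⟩
  rw [closure_openArc huw] at hy
  have hyB := connectedComponentIn_subset _ _ hyB
  rcases hy with rfl | rfl | hy
  exacts [absurd hu hyB, absurd hw hyB, hy]

theorem isHole_openArc {B : Set S1} {u w : S1} (hu : u ∈ B) (hw : w ∈ B) (huw : u ≠ w)
    (hdisj : Disjoint (openArc u w) B) : IsHole B (openArc u w) := by
  obtain ⟨x, hx⟩ := openArc_nonempty huw
  exact ⟨x, hdisj.subset_compl_right hx,
    (connectedComponentIn_compl_eq_openArc hu hw hdisj hx).symm⟩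

theorem IsHole.exists_eq_openArc {B G : Set S1} (hB : B.Finite) (hB2 : 1 < B.ncard)
    (hG : IsHole B G) : ∃ u ∈ B, ∃ w ∈ B, u ≠ w ∧ Disjoint (openArc u w) B ∧ G = openArc u w := by
  obtain ⟨x, hxB, rfl⟩ := hG
  obtain ⟨b₁, hb₁, b₂, hb₂, hb₁₂⟩ := (Set.one_lt_ncard hB).1 hB2
  -- going counterclockwise from `x`, `w` is the first point of `B` and `u` the last one
  obtain ⟨w, hw, hwmin⟩ := Set.exists_min_image B (arcLength x) hB ⟨b₁, hb₁⟩
  obtain ⟨u, hu, humax⟩ := Set.exists_max_image B (arcLength x) hB ⟨b₁, hb₁⟩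
  have hwu : arcLength x w < arcLength x u := by
    by_contra! h
    exact hb₁₂ (arcLength_injective x (by
      linarith [hwmin b₁ hb₁, hwmin b₂ hb₂, humax b₁ hb₁, humax b₂ hb₂]))
  have hdisj : Disjoint (openArc u w) B := by
    refine Set.disjoint_left.2 fun b hb hbB => ?_
    rcases (sbtw_iff_of_arcLength_lt hwu b).1 hb with h | h
    exacts [(hwmin b hbB).not_gt h, (humax b hbB).not_gt h]
  have hx : x ∈ openArc u w := by
    rw [mem_openArc, sbtw_iff_of_arcLength_lt hwu, arcLength_eq_zero_iff.2 rfl]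
    exact Or.inl (arcLength_pos fun h => hxB (h ▸ hw))
  exact ⟨u, hu, w, hw, fun h => hwu.ne (h ▸ rfl), hdisj,
    connectedComponentIn_compl_eq_openArc hu hw hdisj hx⟩

theorem IsHole.len_pos {B G : Set S1} (hB : B.Finite) (hB2 : 1 < B.ncard) (hG : IsHole B G) :
    0 < len G := by
  obtain ⟨u, -, w, -, huw, -, rfl⟩ := hG.exists_eq_openArc hB hB2
  rw [len_openArc]
  exact arcLength_pos huw.symm

theorem IsHole.eq_connectedComponentIn {B G : Set S1} (hG : IsHole B G) {y : S1} (hy : y ∈ G) :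
    G = connectedComponentIn Bᶜ y := by
  obtain ⟨x, -, rfl⟩ := hG
  exact connectedComponentIn_eq hy

theorem IsHoleEnum.sum_len_eq_one {N : ℕ} {B : Set S1} {H : Fin N → Set S1}
    (hH : IsHoleEnum B H) (hB : B.Finite) (hB2 : 1 < B.ncard) : ∑ k, len (H k) = 1 := by
  have hmeas : ∀ k, MeasurableSet (H k) := fun k => by
    obtain ⟨u, -, w, -, -, -, hk⟩ := (hH.2.1 k).exists_eq_openArc hB hB2
    exact hk ▸ (isOpen_openArc u w).measurableSet
  have hdisj : Pairwise (Disjoint on H) := fun k l hkl => Set.disjoint_left.2 fun y hk hl =>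
    hkl (hH.1 (((hH.2.1 k).eq_connectedComponentIn hk).trans
      ((hH.2.1 l).eq_connectedComponentIn hl).symm))
  have hunion : ⋃ k, H k = Bᶜ := by
    refine Subset.antisymm (iUnion_subset fun k y hy => ?_) fun y hy => ?_
    · rw [(hH.2.1 k).eq_connectedComponentIn hy] at hy
      exact connectedComponentIn_subset _ _ hy
    · obtain ⟨k, hk⟩ := hH.2.2.1 _ ⟨y, hy, rfl⟩
      exact mem_iUnion.2 ⟨k, hk ▸ mem_connectedComponentIn hy⟩
  have hvol : volume Bᶜ = 1 := by
    rw [measure_compl hB.measurableSet (measure_ne_top _ _), hB.measure_zero,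
      AddCircle.measure_univ, tsub_zero, ENNReal.ofReal_one]
  have hsum : ∑ k, volume (H k) = 1 := by
    rw [← hvol, ← hunion, measure_iUnion hdisj hmeas, tsum_fintype]
  simp only [len]
  rw [← ENNReal.toReal_sum fun k _ => measure_ne_top _ _, hsum, ENNReal.toReal_one]

theorem isHole_image_openArc {g : S1 → S1} {B : Set S1} (hg : OrientPresOn g B) {u w : S1}
    (hu : u ∈ B) (hw : w ∈ B) (huw : u ≠ w) (hdisj : Disjoint (openArc u w) B) :
    IsHole (g '' B) (openArc (g u) (g w)) := by
  refine isHole_openArc (mem_image_of_mem g hu) (mem_image_of_mem g hw)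
    (fun h => huw (hg.1 hu hw h)) (Set.disjoint_left.2 ?_)
  rintro _ hz ⟨b, hb, rfl⟩
  have hbu : u ≠ b := by rintro rfl; exact sbtw_irrefl_left (mem_openArc.1 hz)
  have hbw : b ≠ w := by rintro rfl; exact sbtw_irrefl_right (mem_openArc.1 hz)
  rcases sbtw_or_sbtw_of_ne hbu hbw huw.symm with h | h
  · exact Set.disjoint_left.1 hdisj h hb
  · exact sbtw_asymm (hg.2 w hw b hb u hu h) hz

theorem IsHoleEnum.exists_bijective_imageHoleRel {N : ℕ} {B : Set S1} (hB : B.Finite)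
    (hB2 : 1 < B.ncard) {g : S1 → S1} (hg : OrientPresOn g B) {H H' : Fin N → Set S1}
    (hH : IsHoleEnum B H) (hH' : IsHoleEnum (g '' B) H') :
    ∃ σ : Fin N → Fin N, Bijective σ ∧ ∀ k, ImageHoleRel g (H k) (H' (σ k)) := by
  choose u hu w hw huw hdisj hk using fun k => (hH.2.1 k).exists_eq_openArc hB hB2
  choose σ hσ using fun k => hH'.2.2.1 _ (isHole_image_openArc hg (hu k) (hw k) (huw k) (hdisj k))
  refine ⟨σ, Finite.injective_iff_bijective.1 fun k l hkl => hH.1 ?_,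
    fun k => ⟨u k, w k, huw k, hk k, hσ k⟩⟩
  have hg_ne : ∀ k, g (u k) ≠ g (w k) := fun k h => huw k (hg.1 (hu k) (hw k) h)
  obtain ⟨h₁, h₂⟩ := openArc_injective (hg_ne k) (hg_ne l) ((hσ k).symm.trans (hkl ▸ hσ l))
  rw [hk, hk, hg.1 (hu k) (hu l) h₁, hg.1 (hw k) (hw l) h₂]

theorem ImageHoleRel.len_eq_fract {d : ℕ} {G K : Set S1} (h : ImageHoleRel (fd d) G K) :
    len K = Int.fract (d * len G) := by
  obtain ⟨u, w, -, rfl, rfl⟩ := h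
  unfold fd
  rw [len_openArc, len_openArc, arcLength_nsmul]

theorem natCast_mul_rem {d : ℕ} (hd : d ≠ 0) (s : ℝ) : d * rem d s = Int.fract (d * s) := by
  rw [rem, mul_sub, mul_div_cancel₀ _ (Nat.cast_ne_zero.2 hd), Int.fract]

theorem fract_natCast_mul_of_lt_inv {d : ℕ} (hd : d ≠ 0) {x : ℝ} (hx : 0 ≤ x)
    (hxd : x < 1 / d) : Int.fract (d * x) = d * x := by
  have hd' : (0 : ℝ) < d := by positivity
  exact Int.fract_eq_self.2 ⟨by positivity, by rwa [lt_div_iff₀ hd', mul_comm] at hxd⟩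

theorem one_le_card_mul_of_sum_eq_one {N : ℕ} {f : Fin N → ℝ} (hf : ∑ j, f j = 1) {c : ℝ}
    (hc : ∀ j, f j ≤ c) : 1 ≤ N * c := by
  calc 1 = ∑ j, f j := hf.symm
    _ ≤ ∑ _j : Fin N, c := Finset.sum_le_sum fun j _ => hc j
    _ = N * c := by simp

/-- The properties of the hole lengths `ℓ n k = len (H n k)` along the orbit of `T` that the
counting argument uses. -/
structure OrbitHoleLengths (d N : ℕ) (ε : ℝ) (ℓ : ℕ → Fin N → ℝ) : Prop where
  one_lt : 1 < d
  card_mul_lt_one : N * (d * ε) < 1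
  pos : ∀ n k, 0 < ℓ n k
  monotone : ∀ n, Monotone (ℓ n)
  sum_eq_one : ∀ n, ∑ k, ℓ n k = 1
  lt_of_add_three_le : ∀ n (k : Fin N), (k : ℕ) + 3 ≤ N → ℓ n k < ε
  step : ∀ n, ∃ σ : Fin N → Fin N, Injective σ ∧ ∀ k, ℓ (n + 1) (σ k) = Int.fract (d * ℓ n k)

namespace OrbitHoleLengths

variable {d N : ℕ} {ε : ℝ} {ℓ : ℕ → Fin N → ℝ}

theorem d_pos (h : OrbitHoleLengths d N ε ℓ) : (0 : ℝ) < d := by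
  have := h.one_lt; positivity

theorem d_ne_zero (h : OrbitHoleLengths d N ε ℓ) : d ≠ 0 := by
  have := h.one_lt; omega

theorem d_mul_eps_lt_one (h : OrbitHoleLengths d N ε ℓ) : d * ε < 1 := by
  have hN : (1 : ℝ) ≤ N := by
    rcases N with _ | N
    · simpa using h.sum_eq_one 0
    · simp
  nlinarith [h.card_mul_lt_one]

theorem eps_lt_inv_d (h : OrbitHoleLengths d N ε ℓ) : ε < 1 / d := by
  rw [lt_div_iff₀ h.d_pos, mul_comm]
  exact h.d_mul_eps_lt_one

theorem add_two_ge_of_le (h : OrbitHoleLengths d N ε ℓ) {n : ℕ} {k : Fin N}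
    (hk : ε ≤ ℓ n k) : N ≤ k + 2 := by
  by_contra! hk'
  exact (h.lt_of_add_three_le n k (by omega)).not_ge hk

theorem not_tie_of_le (h : OrbitHoleLengths d N ε ℓ) {n : ℕ} {k l : Fin N} (hkl : k ≠ l)
    (heq : ℓ n k = ℓ n l) (hε : ε ≤ ℓ n k) (hlt : N * ℓ n k < 1) : False := by
  have hk := h.add_two_ge_of_le hε
  have hl := h.add_two_ge_of_le (heq ▸ hε)
  have hkl' : (k : ℕ) ≠ l := Fin.val_ne_of_ne hkl
  refine hlt.not_ge (one_le_card_mul_of_sum_eq_one (h.sum_eq_one n) fun j => ?_)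
  rcases le_or_gt j k with hj | hj
  · exact h.monotone n hj
  · exact heq ▸ h.monotone n (Fin.le_iff_val_le_val.2 (by omega))

theorem exists_tie_succ (h : OrbitHoleLengths d N ε ℓ) {n : ℕ} {k l : Fin N} (hkl : k ≠ l)
    (heq : ℓ n k = ℓ n l) (hε : ℓ n k < ε) :
    ∃ k' l' : Fin N, k' ≠ l' ∧ ℓ (n + 1) k' = ℓ (n + 1) l' ∧ ℓ (n + 1) k' = d * ℓ n k := by
  obtain ⟨σ, hσ, hσℓ⟩ := h.step n
  have hk : ℓ (n + 1) (σ k) = d * ℓ n k := by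
    rw [hσℓ, fract_natCast_mul_of_lt_inv h.d_ne_zero (h.pos n k).le (hε.trans h.eps_lt_inv_d)]
  exact ⟨σ k, σ l, hσ.ne hkl, by rw [hσℓ, hσℓ, heq], hk⟩

theorem no_tie (h : OrbitHoleLengths d N ε ℓ) {n : ℕ} {k l : Fin N} (hkl : k ≠ l)
    (heq : ℓ n k = ℓ n l) (hlt : ℓ n k < d * ε) : False := by
  obtain ⟨F, hF⟩ := pow_unbounded_of_one_lt (ε / ℓ n k) (Nat.one_lt_cast.2 h.one_lt)
  rw [div_lt_iff₀ (h.pos n k)] at hF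
  induction F generalizing n k l with
  | zero =>
    refine h.not_tie_of_le hkl heq (by simpa using hF.le) ?_
    nlinarith [h.card_mul_lt_one]
  | succ F ih =>
    by_cases hε : ε ≤ ℓ n k
    · exact h.not_tie_of_le hkl heq hε (by nlinarith [h.card_mul_lt_one])
    obtain ⟨k', l', hkl', heq', hk'⟩ := h.exists_tie_succ hkl heq (not_le.1 hε)
    refine ih hkl' heq' ?_ ?_
    · rw [hk']; exact mul_lt_mul_of_pos_left (not_le.1 hε) h.d_pos
    · rw [hk', ← mul_assoc, ← pow_succ]; exact hF

end OrbitHoleLengths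

theorem card_le_val_of_forall_lt {α : Type*} {N : ℕ} {σ : α → Fin N} (hσ : Injective σ)
    {k : α} {S : Finset α} (hS : ∀ m ∈ S, σ m < σ k) : S.card ≤ σ k := by
  simpa using Finset.card_le_card_of_injOn σ (fun m hm => Finset.mem_Iio.2 (hS m hm)) hσ.injOn

theorem card_add_val_lt_of_forall_gt {α : Type*} {N : ℕ} {σ : α → Fin N} (hσ : Injective σ)
    {k : α} {S : Finset α} (hS : ∀ m ∈ S, σ k < σ m) : S.card + σ k < N := by
  have := Finset.card_le_card_of_injOn σ (fun m hm => Finset.mem_Ioi.2 (hS m hm)) hσ.injOn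
  rw [Fin.card_Ioi] at this
  omega

namespace OrbitHoleLengths

variable {d N : ℕ} {ε : ℝ} {ℓ : ℕ → Fin N → ℝ}

theorem eps_pos (h : OrbitHoleLengths d N ε ℓ) {n : ℕ} {k : Fin N} (hk : (k : ℕ) + 3 ≤ N) :
    0 < ε :=
  (h.pos n k).trans (h.lt_of_add_three_le n k hk)

theorem lt_of_lt_of_add_three_le (h : OrbitHoleLengths d N ε ℓ) {n : ℕ} {k m : Fin N}
    (hkm : k < m) (hk : (k : ℕ) + 3 ≤ N) : ℓ n k < ℓ n m := by
  refine (h.monotone n hkm.le).lt_of_ne fun heq => h.no_tie hkm.ne heq ?_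
  have := h.lt_of_add_three_le n k hk
  have := h.eps_pos (n := n) hk
  nlinarith [(Nat.one_lt_cast (α := ℝ)).2 h.one_lt]

theorem lt_critical (h : OrbitHoleLengths d N ε ℓ) {i : ℕ} {cr k : Fin N} (hcr1 : 1 / d < ℓ i cr)
    (hk : (k : ℕ) + 3 ≤ N) : k < cr :=
  (h.monotone i).reflect_lt
    (((h.lt_of_add_three_le i k hk).trans h.eps_lt_inv_d).trans hcr1)

section Step

variable (h : OrbitHoleLengths d N ε ℓ) {i : ℕ} {σ : Fin N → Fin N}
  (hσℓ : ∀ k, ℓ (i + 1) (σ k) = Int.fract (d * ℓ i k))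
include h hσℓ

theorem image_eq_of_lt_inv {k : Fin N} (hk : ℓ i k < 1 / d) :
    ℓ (i + 1) (σ k) = d * ℓ i k := by
  rw [hσℓ, fract_natCast_mul_of_lt_inv h.d_ne_zero (h.pos i k).le hk]

theorem image_eq_of_add_three_le {k : Fin N} (hk : (k : ℕ) + 3 ≤ N) :
    ℓ (i + 1) (σ k) = d * ℓ i k :=
  h.image_eq_of_lt_inv hσℓ ((h.lt_of_add_three_le i k hk).trans h.eps_lt_inv_d)

theorem image_eq_rem (k : Fin N) : ℓ (i + 1) (σ k) = d * rem d (ℓ i k) := by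
  rw [hσℓ, natCast_mul_rem h.d_ne_zero]

theorem image_lt_image_of_lt {k m : Fin N} (hk : (k : ℕ) + 3 ≤ N) (hmk : m < k) :
    ℓ (i + 1) (σ m) < ℓ (i + 1) (σ k) := by
  have hm : (m : ℕ) + 3 ≤ N := by have := Fin.lt_def.1 hmk; omega
  rw [h.image_eq_of_add_three_le hσℓ hk, h.image_eq_of_add_three_le hσℓ hm]
  exact mul_lt_mul_of_pos_left (h.lt_of_lt_of_add_three_le hmk hm) h.d_pos

theorem image_lt_of_rem_lt (hσ : Injective σ) {cr k m : Fin N}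
    (hk : (k : ℕ) + 3 ≤ N) (hm : N ≤ (m : ℕ) + 2) (hcr : N ≤ (cr : ℕ) + 2) (hmcr : m ≠ cr)
    (hr : rem d (ℓ i cr) < ℓ i k) : ℓ (i + 1) (σ k) < ℓ (i + 1) (σ m) := by
  -- otherwise all `N` image lengths would be below `d ε`, too little to add up to `1`
  by_contra! hle
  have hkε := h.lt_of_add_three_le i k hk
  have hd := h.d_pos
  have hLk := h.image_eq_of_add_three_le hσℓ hk
  refine h.card_mul_lt_one.not_ge (one_le_card_mul_of_sum_eq_one (f := fun j => ℓ (i + 1) (σ j))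
    (by rw [(Finite.injective_iff_bijective.1 hσ).sum_comp (ℓ (i + 1)), h.sum_eq_one]) fun j => ?_)
  by_cases hj : (j : ℕ) + 3 ≤ N
  · rw [h.image_eq_of_add_three_le hσℓ hj]
    exact (mul_lt_mul_of_pos_left (h.lt_of_add_three_le i j hj) hd).le
  obtain rfl | rfl : j = cr ∨ j = m := by
    have := Fin.val_ne_of_ne hmcr
    rw [Fin.ext_iff, Fin.ext_iff]
    omega
  · rw [h.image_eq_rem hσℓ]
    nlinarith
  · nlinarith

theorem image_small_lt_image (hσ : Injective σ) {cr k m : Fin N}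
    (hcr1 : 1 / d < ℓ i cr) (hcr2 : ∀ l, 1 / d < ℓ i l → rem d (ℓ i cr) ≤ rem d (ℓ i l))
    (hk : (k : ℕ) + 3 ≤ N) (hkm : k < m) (hmcr : m ≠ cr) (hrk : rem d (ℓ i cr) ≠ ℓ i k) :
    ℓ (i + 1) (σ k) < ℓ (i + 1) (σ m) := by
  have hLk := h.image_eq_of_add_three_le hσℓ hk
  rcases lt_trichotomy (ℓ i m) (1 / d) with hm | hm | hm
  · rw [hLk, h.image_eq_of_lt_inv hσℓ hm]
    exact mul_lt_mul_of_pos_left (h.lt_of_lt_of_add_three_le hkm hk) h.d_pos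
  · have := h.pos (i + 1) (σ m)
    rw [hσℓ, hm, mul_one_div_cancel h.d_pos.ne', Int.fract_one] at this
    exact absurd this (lt_irrefl 0)
  rcases hrk.lt_or_gt with hr | hr
  · have hcr := h.add_two_ge_of_le (h.eps_lt_inv_d.trans hcr1).le
    have hm' := h.add_two_ge_of_le (h.eps_lt_inv_d.trans hm).le
    exact h.image_lt_of_rem_lt hσℓ hσ hk hm' hcr hmcr hr
  · calc ℓ (i + 1) (σ k) = d * ℓ i k := hLk
      _ < d * rem d (ℓ i cr) := mul_lt_mul_of_pos_left hr h.d_pos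
      _ ≤ d * rem d (ℓ i m) := mul_le_mul_of_nonneg_left (hcr2 m hm) h.d_pos.le
      _ = ℓ (i + 1) (σ m) := (h.image_eq_rem hσℓ m).symm

theorem rem_ne (hσ : Injective σ) {cr k : Fin N}
    (hcr1 : 1 / d < ℓ i cr) (hk : (k : ℕ) + 3 ≤ N) : rem d (ℓ i cr) ≠ ℓ i k := by
  intro he
  have hLk := h.image_eq_of_add_three_le hσℓ hk
  refine h.no_tie (n := i + 1) (hσ.ne (h.lt_critical hcr1 hk).ne) ?_ ?_
  · rw [hLk, h.image_eq_rem hσℓ, he]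
  · rw [hLk]
    exact mul_lt_mul_of_pos_left (h.lt_of_add_three_le i k hk) h.d_pos

theorem image_index_of_lt_rem (hσ : Injective σ) {cr k : Fin N}
    (hcr1 : 1 / d < ℓ i cr) (hcr2 : ∀ l, 1 / d < ℓ i l → rem d (ℓ i cr) ≤ rem d (ℓ i l))
    (hk : (k : ℕ) + 3 ≤ N) (hr : ℓ i k < rem d (ℓ i cr)) : σ k = k := by
  have hord : ∀ {m m'}, ℓ (i + 1) (σ m) < ℓ (i + 1) (σ m') → σ m < σ m' :=
    (h.monotone (i + 1)).reflect_lt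
  have hbelow := card_le_val_of_forall_lt hσ (k := k) (S := Finset.Iio k) fun m hm =>
    hord (h.image_lt_image_of_lt hσℓ hk (Finset.mem_Iio.1 hm))
  have habove := card_add_val_lt_of_forall_gt hσ (k := k) (S := Finset.Ioi k) fun m hm => by
    refine hord ?_
    rcases eq_or_ne m cr with rfl | hmcr
    · rw [h.image_eq_of_add_three_le hσℓ hk, h.image_eq_rem hσℓ]
      exact mul_lt_mul_of_pos_left hr h.d_pos
    · exact h.image_small_lt_image hσℓ hσ hcr1 hcr2 hk (Finset.mem_Ioi.1 hm) hmcr hr.ne'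
  rw [Fin.card_Iio] at hbelow
  rw [Fin.card_Ioi] at habove
  exact Fin.ext (by omega)

theorem image_index_of_rem_lt (hσ : Injective σ) {cr k : Fin N}
    (hcr1 : 1 / d < ℓ i cr) (hcr2 : ∀ l, 1 / d < ℓ i l → rem d (ℓ i cr) ≤ rem d (ℓ i l))
    (hk : (k : ℕ) + 3 ≤ N) (hr : rem d (ℓ i cr) < ℓ i k) :
    (σ k : ℕ) = k + 1 ∧ (σ cr : ℕ) ≤ k := by
  have hord : ∀ {m m'}, ℓ (i + 1) (σ m) < ℓ (i + 1) (σ m') → σ m < σ m' :=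
    (h.monotone (i + 1)).reflect_lt
  have hkcr := h.lt_critical hcr1 hk
  have hcrk : ℓ (i + 1) (σ cr) < ℓ (i + 1) (σ k) := by
    rw [h.image_eq_of_add_three_le hσℓ hk, h.image_eq_rem hσℓ]
    exact mul_lt_mul_of_pos_left hr h.d_pos
  have hgt : ∀ m ∈ (Finset.Ioi k).erase cr, ℓ (i + 1) (σ k) < ℓ (i + 1) (σ m) := fun m hm =>
    h.image_small_lt_image hσℓ hσ hcr1 hcr2 hk (Finset.mem_Ioi.1 (Finset.mem_of_mem_erase hm))
      (Finset.ne_of_mem_erase hm) hr.ne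
  have hbelow := card_le_val_of_forall_lt hσ (k := k) (S := insert cr (Finset.Iio k))
    fun m hm => by
      rcases Finset.mem_insert.1 hm with rfl | hm
      exacts [hord hcrk, hord (h.image_lt_image_of_lt hσℓ hk (Finset.mem_Iio.1 hm))]
  have habove := card_add_val_lt_of_forall_gt hσ (k := k) (S := (Finset.Ioi k).erase cr)
    fun m hm => hord (hgt m hm)
  have hcr_above := card_add_val_lt_of_forall_gt hσ (k := cr) (S := (Finset.Ici k).erase cr)
    fun m hm => by
      refine hord ?_
      rcases (Finset.mem_Ici.1 (Finset.mem_of_mem_erase hm)).eq_or_lt with rfl | hkm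
      · exact hcrk
      · exact hcrk.trans (hgt m (Finset.mem_erase.2 ⟨Finset.ne_of_mem_erase hm,
          Finset.mem_Ioi.2 hkm⟩))
  rw [Finset.card_insert_of_notMem (fun h => (Finset.mem_Iio.1 h).not_gt hkcr), Fin.card_Iio]
    at hbelow
  rw [Finset.card_erase_of_mem (Finset.mem_Ioi.2 hkcr), Fin.card_Ioi] at habove
  rw [Finset.card_erase_of_mem (Finset.mem_Ici.2 hkcr.le), Fin.card_Ici] at hcr_above
  have := Fin.lt_def.1 hkcr
  omega

end Step

end OrbitHoleLengths

theorem exists_bijective_imageHoleRel_iterate {d N : ℕ} {T : Set S1} {H : ℕ → Fin N → Set S1}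
    (hN : 1 < N) (hH : ∀ n, IsHoleEnum ((fd d)^[n] '' T) (H n))
    (hor : ∀ n, OrientPresOn (fd d) ((fd d)^[n] '' T)) {n : ℕ}
    (hcard : ((fd d)^[n] '' T).ncard = N) :
    ∃ σ : Fin N → Fin N, Bijective σ ∧ ∀ k, ImageHoleRel (fd d) (H n k) (H (n + 1) (σ k)) := by
  have hH' := hH (n + 1)
  rw [iterate_succ', image_comp] at hH'
  exact (hH n).exists_bijective_imageHoleRel (Set.finite_of_ncard_pos (by omega)) (by omega)
    (hor n) hH'

theorem orbitHoleLengths {d N : ℕ} (hd : 1 < d) (hN : 1 < N) {T : Set S1}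
    (hcard : ∀ n, ((fd d)^[n] '' T).ncard = N) {H : ℕ → Fin N → Set S1}
    (hH : ∀ n, IsHoleEnum ((fd d)^[n] '' T) (H n))
    (hor : ∀ n, OrientPresOn (fd d) ((fd d)^[n] '' T))
    {εT : ℝ} (hε' : εT < 1 / (3 * (d : ℝ) * N))
    (hsmall : ∀ n (k : Fin N), (k : ℕ) + 3 ≤ N → len (H n k) < εT) :
    OrbitHoleLengths d N εT fun n k => len (H n k) where
  one_lt := hd
  card_mul_lt_one := by
    have hdN : (0 : ℝ) < d * N := by positivity
    rw [lt_div_iff₀ (by positivity)] at hε'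
    nlinarith
  pos n k := ((hH n).2.1 k).len_pos (Set.finite_of_ncard_pos (by rw [hcard]; omega))
    (by rw [hcard]; omega)
  monotone n := (hH n).2.2.2
  sum_eq_one n := (hH n).sum_len_eq_one (Set.finite_of_ncard_pos (by rw [hcard]; omega))
    (by rw [hcard]; omega)
  lt_of_add_three_le := hsmall
  step n := by
    obtain ⟨σ, hσ, hrel⟩ := exists_bijective_imageHoleRel_iterate (by omega) hH hor (hcard n)
    exact ⟨σ, hσ.1, fun k => (hrel k).len_eq_fract⟩

/-- Indices are 0-based: the 1-based `k ∈ {1, …, N - 2}` is `(k : ℕ) < N - 2`, and "one of the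
`k` smallest holes" is an index `≤ (k : ℕ)`. -/
theorem stmt14 (d N i : ℕ) (hd : 2 ≤ d) (hN : 3 ≤ N) (T : Set S1)
    (hw : Wandering d N T)
    (H : ℕ → Fin N → Set S1)
    (hH : ∀ n, IsHoleEnum ((fd d)^[n] '' T) (H n))
    (hor : ∀ n, OrientPresOn (fd d) ((fd d)^[n] '' T))
    (εT : ℝ) (hε' : εT < 1 / (3 * (d : ℝ) * N))
    (hsmall : ∀ n, len (H n ⟨N - 3, by omega⟩) < εT)
    (cr : Fin N)
    (hcr1 : 1 / (d : ℝ) < len (H i cr))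
    (hcr2 : ∀ l : Fin N, 1 / (d : ℝ) < len (H i l) →
      rem d (len (H i cr)) ≤ rem d (len (H i l))) :
    ∀ k : Fin N, (hk : (k : ℕ) < N - 2) →
      (Xor'
        (rem d (len (H i cr)) < len (H i k) ∧
          ImageHoleRel (fd d) (H i k) (H (i + 1) ⟨(k : ℕ) + 1, by omega⟩))
        (len (H i k) < rem d (len (H i cr)) ∧
          ImageHoleRel (fd d) (H i k) (H (i + 1) k))) ∧
      (rem d (len (H i cr)) < len (H i k) →
        (∃ k' : Fin N, (k' : ℕ) ≤ (k : ℕ) ∧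
          ImageHoleRel (fd d) (H i cr) (H (i + 1) k')) ∧
        rem d (len (H i cr)) < εT) := by
  intro k hk
  have hk3 : (k : ℕ) + 3 ≤ N := by omega
  have hcard n := (hw n n).1
  have hℓ := orbitHoleLengths hd (by omega) hcard hH hor hε' fun n k hk =>
    ((hH n).2.2.2 k _ (Fin.le_def.2 (by simp; omega))).trans_lt (hsmall n)
  obtain ⟨σ, hσ, hrel⟩ := exists_bijective_imageHoleRel_iterate (by omega) hH hor (hcard i)
  have hσℓ k := (hrel k).len_eq_fract
  have hrelk := hrel k
  rcases (hℓ.rem_ne hσℓ hσ.1 hcr1 hk3).lt_or_gt with hr | hr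
  · obtain ⟨hσk, hσcr⟩ := hℓ.image_index_of_rem_lt hσℓ hσ.1 hcr1 hcr2 hk3 hr
    rw [show σ k = ⟨k + 1, by omega⟩ from Fin.ext hσk] at hrelk
    exact ⟨Or.inl ⟨⟨hr, hrelk⟩, fun h => h.1.not_gt hr⟩,
      fun _ => ⟨⟨σ cr, hσcr, hrel cr⟩, hr.trans (hℓ.lt_of_add_three_le i k hk3)⟩⟩
  · rw [hℓ.image_index_of_lt_rem hσℓ hσ.1 hcr1 hcr2 hk3 hr] at hrelk
    exact ⟨Or.inr ⟨⟨hr, hrelk⟩, fun h => h.1.not_gt hr⟩, fun h => absurd h hr.not_gt⟩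
end
end

section
/- Let T form a wandering N-gon under f(z) = z^d. Suppose (i_n) is a strictly increasing sequence of non-negative integers such that CH(T_{i_n}) converges (Hausdorff) to a chord p, and (x_n) is a sequence of points of S^1 such that x_n lies in one of the N−2 smallest holes of T_{i_n} for every n. Then the set of limit points of (x_n) is a non-empty subset of p ∩ S^1. -/
open MeasureTheory Set Metric Filter Topology

noncomputable section

/-!
Once `CH (T_{i_n})` is Hausdorff-close to the chord `ab`, every vertex of `T_{i_n}` is close to `a`
or `b`, because the only points of the circle on a chord are its endpoints. A point `z` of a hole
far from both `a` and `b` would lie on one of the two arcs cut out by the clusters of vertices near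
`a` and `b`; that arc then lies in the hole of `z`, and the length of the circle leaves no room for
this when the hole of `z` is among the `N - 2` smallest: at least two holes are at least as long.
So the points `x n` accumulate only at `a` or `b`, and some accumulation point exists by
compactness of the circle.
-/

instance : LocallyConnectedSpace S1 :=
  (QuotientAddGroup.isQuotientMap_mk _).isCoinducing.locallyConnectedSpace

instance : IsProbabilityMeasure (volume : Measure S1) := ⟨UnitAddCircle.measure_univ⟩

lemma len_eq_measureReal (A : Set S1) : len A = volume.real A := rfl

lemma norm_coe_le_abs (s : ℝ) : ‖(s : S1)‖ ≤ |s| := by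
  simpa [AddCircle.norm_eq] using round_le s 0

lemma le_norm_coe {ε s : ℝ} (n : ℤ) (h₀ : n + ε ≤ s) (h₁ : s ≤ n + 1 - ε) :
    ε ≤ ‖(s : S1)‖ := by
  rcases le_or_gt ε 0 with hε | hε
  · exact hε.trans (norm_nonneg _)
  have hfract : Int.fract s = s - n := Int.fract_eq_iff.2 ⟨by linarith, by linarith, n, by ring⟩
  have hnorm : ‖(s : S1)‖ = min (Int.fract s) (1 - Int.fract s) := by
    simpa [AddCircle.norm_eq] using abs_sub_round_eq_min s
  rw [hnorm, hfract]
  exact le_min (by linarith) (by linarith)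

lemma le_dist_coe {ε s α : ℝ} (n : ℤ) (h₀ : α + n + ε ≤ s) (h₁ : s ≤ α + n + 1 - ε) :
    ε ≤ dist (s : S1) α := by
  rw [dist_eq_norm, ← AddCircle.coe_sub]
  exact le_norm_coe n (by linarith) (by linarith)

lemma lt_and_lt_of_lt_norm_coe {D p : ℝ} (hp₀ : 0 ≤ p) (hp₁ : p ≤ 1) (h : D < ‖(p : S1)‖) :
    D < p ∧ p < 1 - D := by
  have h₀ := norm_coe_le_abs p
  have h₁ := norm_coe_le_abs (p - 1)
  rw [AddCircle.coe_sub, AddCircle.coe_period, sub_zero] at h₁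
  rw [abs_of_nonneg hp₀] at h₀
  rw [abs_of_nonpos (by linarith)] at h₁
  constructor <;> linarith

lemma le_len_of_image_Icc_subset {u v : ℝ} (huv : v ≤ u + 1) {G : Set S1}
    (hG : ((↑) : ℝ → S1) '' Icc u v ⊆ G) : v - u ≤ len G := by
  have hmeas : MeasurableSet (((↑) : ℝ → S1) '' Icc u v) :=
    (isCompact_Icc.image (AddCircle.continuous_mk' 1)).isClosed.measurableSet
  refine (ENNReal.ofReal_le_iff_le_toReal (measure_ne_top _ _)).1 ?_
  calc ENNReal.ofReal (v - u) = volume (Ioc u v) := Real.volume_Ioc.symm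
    _ ≤ volume.restrict (Ioc u (u + 1)) ((↑) ⁻¹' (((↑) : ℝ → S1) '' Icc u v)) := by
        rw [Measure.restrict_apply' measurableSet_Ioc]
        exact measure_mono fun t ht =>
          ⟨subset_preimage_image _ _ (Ioc_subset_Icc_self ht), ht.1, ht.2.trans huv⟩
    _ = volume (((↑) : ℝ → S1) '' Icc u v) :=
        (UnitAddCircle.measurePreserving_mk u).measure_preimage hmeas.nullMeasurableSet
    _ ≤ volume G := measure_mono hG

namespace IsHole

variable {B G G' : Set S1}

lemma eq_connectedComponentIn_s17 (hG : IsHole B G) {z : S1} (hz : z ∈ G) :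
    G = connectedComponentIn Bᶜ z := by
  obtain ⟨w, -, rfl⟩ := hG
  exact connectedComponentIn_eq hz

lemma disjoint (hG : IsHole B G) (hG' : IsHole B G') (hne : G ≠ G') : Disjoint G G' :=
  Set.disjoint_left.2 fun _ hz hz' =>
    hne ((hG.eq_connectedComponentIn_s17 hz).trans (hG'.eq_connectedComponentIn_s17 hz').symm)

lemma isOpen (hB : IsClosed B) (hG : IsHole B G) : IsOpen G := by
  obtain ⟨w, -, rfl⟩ := hG
  exact hB.isOpen_compl.connectedComponentIn

lemma subset_of_isPreconnected (hG : IsHole B G) {J : Set S1} (hJ : IsPreconnected J)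
    (hJB : J ⊆ Bᶜ) {z : S1} (hzJ : z ∈ J) (hzG : z ∈ G) : J ⊆ G :=
  hG.eq_connectedComponentIn_s17 hzG ▸ hJ.subset_connectedComponentIn hzJ hJB

end IsHole

lemma exists_isHole_superset {B J : Set S1} (hJ : IsPreconnected J) (hJB : J ⊆ Bᶜ)
    (hne : J.Nonempty) : ∃ G, IsHole B G ∧ J ⊆ G := by
  obtain ⟨z, hz⟩ := hne
  exact ⟨_, ⟨z, hJB hz, rfl⟩, hJ.subset_connectedComponentIn hz hJB⟩

namespace IsHoleEnum

variable {B : Set S1} {N : ℕ} {H : Fin N → Set S1}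

lemma isHole (hH : IsHoleEnum B H) (k : Fin N) : IsHole B (H k) := hH.2.1 k

lemma exists_eq_of_isHole (hH : IsHoleEnum B H) {G : Set S1} (hG : IsHole B G) :
    ∃ k, H k = G :=
  hH.2.2.1 G hG

lemma len_mono (hH : IsHoleEnum B H) {k l : Fin N} (hkl : k ≤ l) : len (H k) ≤ len (H l) :=
  hH.2.2.2 k l hkl

lemma len_add_len_add_len_le_one (hB : IsClosed B) (hH : IsHoleEnum B H) {i j l : Fin N}
    (hij : i ≠ j) (hil : i ≠ l) (hjl : j ≠ l) : len (H i) + len (H j) + len (H l) ≤ 1 := by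
  have hdisj {m m' : Fin N} (h : m ≠ m') : Disjoint (H m) (H m') :=
    (hH.isHole m).disjoint (hH.isHole m') (hH.1.ne h)
  have hmeas (m : Fin N) : MeasurableSet (H m) := ((hH.isHole m).isOpen hB).measurableSet
  simp only [len_eq_measureReal]
  rw [← measureReal_union (hdisj hij) (hmeas j),
    ← measureReal_union (Set.disjoint_union_left.2 ⟨hdisj hil, hdisj hjl⟩) (hmeas l)]
  exact measureReal_le_one

lemma two_mul_len_add_len_le_one (hB : IsClosed B) (hH : IsHoleEnum B H) {k m : Fin N}
    (hk : (k : ℕ) < N - 2) (hmk : m ≠ k) : 2 * len (H k) + len (H m) ≤ 1 := by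
  obtain ⟨l, hlk, hlm, hkl⟩ : ∃ l : Fin N, l ≠ k ∧ l ≠ m ∧ len (H k) ≤ len (H l) := by
    by_cases hm : m = ⟨N - 1, by omega⟩
    · refine ⟨⟨N - 2, by omega⟩, ?_, ?_, hH.len_mono ?_⟩
      all_goals simp [Fin.ext_iff, Fin.le_def, hm]; omega
    · refine ⟨⟨N - 1, by omega⟩, ?_, Ne.symm hm, hH.len_mono ?_⟩
      all_goals simp [Fin.ext_iff, Fin.le_def]; omega
  linarith [hH.len_add_len_add_len_le_one hB hlk.symm hmk.symm hlm]

lemma three_mul_len_le_one (hB : IsClosed B) (hH : IsHoleEnum B H) {k : Fin N}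
    (hk : (k : ℕ) < N - 2) : 3 * len (H k) ≤ 1 := by
  have hkm : k ≤ ⟨N - 1, by omega⟩ := by simp [Fin.le_def]; omega
  linarith [hH.two_mul_len_add_len_le_one hB hk (m := ⟨N - 1, by omega⟩)
    (by simp [Fin.ext_iff]; omega), hH.len_mono hkm]

end IsHoleEnum

lemma image_Icc_subset_compl {B : Set S1} {α β ε u v : ℝ}
    (hB : ∀ w ∈ B, dist w α < ε ∨ dist w β < ε) (m n : ℤ)
    (hα : Icc u v ⊆ Icc (α + m + ε) (α + m + 1 - ε))
    (hβ : Icc u v ⊆ Icc (β + n + ε) (β + n + 1 - ε)) :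
    ((↑) : ℝ → S1) '' Icc u v ⊆ Bᶜ := by
  rintro - ⟨s, hs, rfl⟩ hsB
  rcases hB _ hsB with h | h
  · exact (le_dist_coe m (hα hs).1 (hα hs).2).not_gt h
  · exact (le_dist_coe n (hβ hs).1 (hβ hs).2).not_gt h

lemma isPreconnected_image_Icc (u v : ℝ) : IsPreconnected (((↑) : ℝ → S1) '' Icc u v) :=
  isPreconnected_Icc.image _ (AddCircle.continuous_mk' 1).continuousOn

/-- The arc from `b` to `a` through `ζ`, shrunk by `ε` at both ends, lies in `H k`. The hole
containing the other arc is either `H k`, and then `3 * len (H k) > 1`, or another hole, and then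
it overflows the circle together with `H k` and a hole at least as long as `H k`. -/
lemma IsHoleEnum.coe_notMem_of_vertices_near {B : Set S1} (hB : IsClosed B) {N : ℕ}
    {H : Fin N → Set S1} (hH : IsHoleEnum B H) {k : Fin N} (hk : (k : ℕ) < N - 2)
    {ε ζ p q : ℝ} (hε : 0 < ε) (hp : 4 * ε < p) (hpq : p ≤ q)
    (hq : q < 1 - 4 * ε) (hnear : ∀ w ∈ B, dist w (ζ + p : ℝ) < ε ∨ dist w (ζ + q : ℝ) < ε) :
    (ζ : S1) ∉ H k := by
  intro hz
  have hJ₁B : ((↑) : ℝ → S1) '' Icc (ζ + q - 1 + ε) (ζ + p - ε) ⊆ Bᶜ := by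
    refine image_Icc_subset_compl hnear (-1) (-1) (Icc_subset_Icc ?_ ?_) (Icc_subset_Icc ?_ ?_) <;>
      push_cast <;> linarith
  have hJ₁ := (hH.isHole k).subset_of_isPreconnected (isPreconnected_image_Icc _ _) hJ₁B
    (mem_image_of_mem _ ⟨by linarith, by linarith⟩) hz
  have hc₁ := le_len_of_image_Icc_subset (by linarith) hJ₁
  have h₃ := hH.three_mul_len_le_one hB hk
  rcases lt_or_ge (q - p) (2 * ε) with hqp | hqp
  · linarith
  have hJ₂B : ((↑) : ℝ → S1) '' Icc (ζ + p + ε) (ζ + q - ε) ⊆ Bᶜ := by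
    refine image_Icc_subset_compl hnear 0 (-1) (Icc_subset_Icc ?_ ?_) (Icc_subset_Icc ?_ ?_) <;>
      push_cast <;> linarith
  obtain ⟨G, hG, hJ₂⟩ := exists_isHole_superset (isPreconnected_image_Icc _ _) hJ₂B
    ((nonempty_Icc.2 (by linarith)).image _)
  obtain ⟨m, rfl⟩ := hH.exists_eq_of_isHole hG
  have hc₂ := le_len_of_image_Icc_subset (by linarith) hJ₂
  rcases eq_or_ne m k with rfl | hmk
  · linarith
  · linarith [hH.two_mul_len_add_len_le_one hB hk hmk]

lemma IsHoleEnum.dist_le_of_mem_of_vertices_near {B : Set S1} (hB : IsClosed B) {N : ℕ}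
    {H : Fin N → Set S1} (hH : IsHoleEnum B H) {k : Fin N} (hk : (k : ℕ) < N - 2)
    {a b : S1} {ε : ℝ} (hε : 0 < ε)
    (hnear : ∀ w ∈ B, dist w a < ε ∨ dist w b < ε) {z : S1} (hz : z ∈ H k) :
    dist z a ≤ 4 * ε ∨ dist z b ≤ 4 * ε := by
  by_contra! hfar
  obtain ⟨ζ, rfl⟩ := QuotientAddGroup.mk_surjective z
  obtain ⟨p, hp, hpa⟩ := AddCircle.eq_coe_Ico (a - (ζ : S1))
  obtain ⟨q, hq, hqb⟩ := AddCircle.eq_coe_Ico (b - (ζ : S1))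
  replace hpa : a = ((ζ + p : ℝ) : S1) := by rw [AddCircle.coe_add, hpa]; abel
  replace hqb : b = ((ζ + q : ℝ) : S1) := by rw [AddCircle.coe_add, hqb]; abel
  subst hpa hqb
  have bounds {r : ℝ} (hr : r ∈ Ico (0 : ℝ) 1) (hfar : 4 * ε < dist (ζ : S1) (ζ + r : ℝ)) :
      4 * ε < r ∧ r < 1 - 4 * ε := by
    rw [dist_comm, dist_eq_norm, ← AddCircle.coe_sub, add_sub_cancel_left] at hfar
    exact lt_and_lt_of_lt_norm_coe hr.1 hr.2.le hfar
  obtain ⟨hp₀, hp₁⟩ := bounds hp hfar.1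
  obtain ⟨hq₀, hq₁⟩ := bounds hq hfar.2
  rcases le_total p q with hpq | hqp
  · exact hH.coe_notMem_of_vertices_near hB hk hε hp₀ hpq hq₁ hnear hz
  · exact hH.coe_notMem_of_vertices_near hB hk hε hq₀ hqp hp₁
      (fun w hw => (hnear w hw).symm) hz

lemma continuous_emb : Continuous emb :=
  continuous_subtype_val.comp AddCircle.continuous_toCircle

lemma emb_injective : Function.Injective emb := fun _ _ h =>
  AddCircle.injective_toCircle one_ne_zero (Subtype.ext h)

lemma norm_emb (x : S1) : ‖emb x‖ = 1 := Circle.norm_coe _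

lemma emb_mem_closedBall (x : S1) : emb x ∈ closedBall (0 : ℂ) 1 :=
  mem_closedBall_zero_iff.2 (norm_emb x).le

lemma CH_subset_closedBall (A : Set S1) : CH A ⊆ closedBall 0 1 :=
  convexHull_min (by rintro - ⟨w, -, rfl⟩; exact emb_mem_closedBall w) (convex_closedBall _ _)

lemma isCompact_chord (a b : S1) : IsCompact (chord a b) := by
  rw [chord, segment_eq_image ℝ]
  exact isCompact_Icc.image (by fun_prop)

lemma chord_nonempty (a b : S1) : (chord a b).Nonempty :=
  ⟨emb a, left_mem_segment ℝ _ _⟩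

lemma eq_or_eq_of_emb_mem_chord {a b x : S1} (h : emb x ∈ chord a b) : x = a ∨ x = b := by
  rcases eq_or_ne (emb a) (emb b) with hab | hab
  · rw [chord, hab, segment_same, mem_singleton_iff] at h
    exact Or.inr (emb_injective h)
  rw [chord, ← insert_endpoints_openSegment] at h
  rcases h with h | h | h
  · exact Or.inl (emb_injective h)
  · exact Or.inr (emb_injective h)
  · have := openSegment_subset_ball_of_ne (emb_mem_closedBall a) (emb_mem_closedBall b) hab h
    rw [mem_ball_zero_iff, norm_emb] at this
    exact absurd this (lt_irrefl 1)

lemma exists_pos_forall_infDist_chord_lt (a b : S1) {ε : ℝ} (hε : 0 < ε) :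
    ∃ δ > 0, ∀ x : S1, infDist (emb x) (chord a b) < δ → dist x a < ε ∨ dist x b < ε := by
  have hK : IsCompact ({x : S1 | ε ≤ dist x a} ∩ {x | ε ≤ dist x b}) :=
    ((isClosed_le continuous_const (continuous_id.dist continuous_const)).inter
      (isClosed_le continuous_const (continuous_id.dist continuous_const))).isCompact
  obtain ⟨δ, hδ, hδK⟩ := hK.exists_forall_le' (a := 0)
    ((continuous_infDist_pt _).comp continuous_emb).continuousOn fun x hx => by
      refine ((isCompact_chord a b).isClosed.notMem_iff_infDist_pos (chord_nonempty a b)).1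
        fun hmem => ?_
      rcases eq_or_eq_of_emb_mem_chord hmem with rfl | rfl
      · exact hε.not_ge (by simpa using hx.1)
      · exact hε.not_ge (by simpa using hx.2)
  refine ⟨δ, hδ, fun x hx => ?_⟩
  by_contra! h
  exact (hδK x h).not_gt hx

lemma infDist_emb_le_hausdorffDist {A : Set S1} {v : S1} (hv : v ∈ A) (a b : S1) :
    infDist (emb v) (chord a b) ≤ hausdorffDist (CH A) (chord a b) := by
  have hvA : emb v ∈ CH A := subset_convexHull ℝ _ (mem_image_of_mem _ hv)
  exact infDist_le_hausdorffDist_of_mem hvA <| hausdorffEDist_ne_top_of_nonempty_of_bounded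
    ⟨_, hvA⟩ (chord_nonempty a b) (isBounded_closedBall.subset (CH_subset_closedBall A))
    (isCompact_chord a b).isBounded

lemma eventually_mem_cthickening_of_mem_smallHole {N : ℕ} {A : ℕ → Set S1}
    (hA : ∀ n, IsClosed (A n)) {H : ℕ → Fin N → Set S1} (hH : ∀ n, IsHoleEnum (A n) (H n))
    {a b : S1} (hconv : Tendsto (fun n => hausdorffDist (CH (A n)) (chord a b)) atTop (𝓝 0))
    {x : ℕ → S1} (hx : ∀ n, ∃ k : Fin N, (k : ℕ) < N - 2 ∧ x n ∈ H n k) {ε : ℝ} (hε : 0 < ε) :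
    ∀ᶠ n in atTop, x n ∈ cthickening ε {a, b} := by
  obtain ⟨δ, hδ, hnear⟩ := exists_pos_forall_infDist_chord_lt a b (by positivity : 0 < ε / 4)
  filter_upwards [hconv.eventually_lt_const hδ] with n hn
  obtain ⟨k, hk, hxk⟩ := hx n
  have hvert (v : S1) (hv : v ∈ A n) : dist v a < ε / 4 ∨ dist v b < ε / 4 :=
    hnear v ((infDist_emb_le_hausdorffDist hv a b).trans_lt hn)
  rcases (hH n).dist_le_of_mem_of_vertices_near (hA n) hk (by positivity) hvert hxk with h | h
  · exact mem_cthickening_of_dist_le _ a _ _ (mem_insert _ _) (by linarith)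
  · exact mem_cthickening_of_dist_le _ b _ _ (mem_insert_of_mem _ rfl) (by linarith)

theorem stmt17_general (d N : ℕ) (T : Set S1)
    (hw : Wandering d N T)
    (H : ℕ → Fin N → Set S1)
    (hH : ∀ n, IsHoleEnum ((fd d)^[n] '' T) (H n))
    (idx : ℕ → ℕ) (a b : S1)
    (hconv : Tendsto (fun n => hausdorffDist (CH ((fd d)^[idx n] '' T)) (chord a b))
      atTop (nhds 0))
    (x : ℕ → S1)
    (hx : ∀ n, ∃ k : Fin N, (k : ℕ) < N - 2 ∧ x n ∈ H (idx n) k) :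
    (∃ y : S1, MapClusterPt y atTop x) ∧
    (∀ y : S1, MapClusterPt y atTop x → y = a ∨ y = b) := by
  refine ⟨exists_clusterPt_of_compactSpace _, fun y hy => ?_⟩
  have hN : N ≠ 0 := by obtain ⟨k, hk, -⟩ := hx 0; omega
  have hclosed (n : ℕ) : IsClosed ((fd d)^[idx n] '' T) :=
    (finite_of_ncard_ne_zero ((hw (idx n) 0).1 ▸ hN)).isClosed
  have hy_mem : y ∈ closure {a, b} := by
    rw [closure_eq_iInter_cthickening, mem_iInter₂]
    exact fun ε hε => isClosed_cthickening.mem_of_mapClusterPt hy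
      (eventually_mem_cthickening_of_mem_smallHole hclosed (fun n => hH (idx n)) hconv hx hε)
  simpa [(toFinite {a, b}).isClosed.closure_eq] using hy_mem

/-- if CH(T_{i_n}) converges to a (possibly degenerate) chord p with
endpoints a, b, and x_n lies in one of the N-2 smallest holes of T_{i_n}, then the
set of limit points of (x_n) is non-empty and contained in p ∩ S¹ = {a, b}. -/
theorem stmt17 (d N : ℕ) (hd : 2 ≤ d) (hN : 3 ≤ N) (T : Set S1)
    (hw : Wandering d N T)
    (H : ℕ → Fin N → Set S1)
    (hH : ∀ n, IsHoleEnum ((fd d)^[n] '' T) (H n))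
    (idx : ℕ → ℕ) (hidx : StrictMono idx) (a b : S1)
    (hconv : Tendsto (fun n => hausdorffDist (CH ((fd d)^[idx n] '' T)) (chord a b))
      atTop (nhds 0))
    (x : ℕ → S1)
    (hx : ∀ n, ∃ k : Fin N, (k : ℕ) < N - 2 ∧ x n ∈ H (idx n) k) :
    (∃ y : S1, MapClusterPt y atTop x) ∧
    (∀ y : S1, MapClusterPt y atTop x → y = a ∨ y = b) :=
  stmt17_general d N T hw H hH idx a b hconv x hx
end
end
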